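/- For every integer k ≥ 4, h_{k,k+3} = (32/3)k^3 - 44k^2 + (268/3)k - 76 (equivalently, 3·h_{k,k+3} = 32k^3 - 132k^2 + 268k - 228). -/

import Mathlib

/-- Integer binomial coefficient with the convention
`C(a,b) = a!/(b!(a-b)!)` if `0 ≤ b ≤ a` and `C(a,b) = 0` otherwise. -/
def ichoose (a b : ℤ) : ℤ := if 0 ≤ b ∧ b ≤ a then (a.toNat.choose b.toNat : ℤ) else 0

/-- The Delannoy numbers `D(n,m) = ∑_{k=0}^m C(m,k) C(n+m-k, m)`. -/
def delannoy (n m : ℕ) : ℕ :=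
  ∑ k ∈ Finset.range (m + 1), Nat.choose m k * Nat.choose (n + m - k) m

/-- `h k n = ∑_{i=0}^{k-1} D(k-1-i, i) C(n-i+k-2, 2k-2)` is the number of
column-convex polyominoes with `k` columns and area `n`. -/
def ccPoly (k n : ℕ) : ℤ :=
  ∑ i ∈ Finset.range k,
    (delannoy (k - 1 - i) i : ℤ) * ichoose ((n : ℤ) - i + k - 2) (2 * (k : ℤ) - 2)

/-- `r k m = ∑_{i=k}^{m-k} h_{k,i} h_{k,m-i}` is the number of plateau polycubes
of width `k` and lateral area `m`. -/
def plateau (k m : ℕ) : ℤ :=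
  ∑ i ∈ Finset.Icc k (m - k), ccPoly k i * ccPoly k (m - i)

/-! The summand of index `i` in `h_{k,k+j}` carries the factor `C(2k-2+j-i, 2k-2)`, which
vanishes for `i > j`; so for `j < k` only the terms `D(k-1-i, i) C(2k-2+j-i, j-i)` with `i ≤ j`
survive.  For `j = 3` both factors are polynomials in `k`, since `D(n, i)` is a polynomial in `n`
of degree `i`, and their sum is the stated cubic. -/

lemma ichoose_natCast (a b : ℕ) : ichoose a b = a.choose b := by
  unfold ichoose
  split_ifs with h
  · simp
  · rw [Nat.choose_eq_zero_of_lt (by omega), Nat.cast_zero]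

lemma ichoose_eq_zero_of_lt {a b : ℤ} (h : a < b) : ichoose a b = 0 :=
  if_neg fun hb => by omega

lemma ccPoly_add_eq_sum {k j : ℕ} (hj : j < k) :
    ccPoly k (k + j) =
      ∑ i ∈ Finset.range (j + 1),
        ((delannoy (k - 1 - i) i * (2 * k - 2 + (j - i)).choose (j - i) : ℕ) : ℤ) := by
  unfold ccPoly
  rw [← Finset.sum_subset (Finset.range_subset_range.2 hj)]
  · refine Finset.sum_congr rfl fun i hi => ?_
    have hij : i ≤ j := Nat.lt_succ_iff.1 (Finset.mem_range.1 hi)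
    have htop : ((k + j : ℕ) : ℤ) - i + k - 2 = ((2 * k - 2 + (j - i) : ℕ) : ℤ) := by omega
    have hbot : 2 * (k : ℤ) - 2 = ((2 * k - 2 : ℕ) : ℤ) := by omega
    rw [htop, hbot, ichoose_natCast, Nat.choose_symm_add, Nat.cast_mul]
  · intro i _ hi
    rw [ichoose_eq_zero_of_lt (by rw [Finset.mem_range] at hi; omega), mul_zero]

lemma cast_choose_three {K : Type*} [Field K] [CharZero K] (n : ℕ) :
    (n.choose 3 : K) = n * (n - 1) * (n - 2) / 6 := by
  induction n with
  | zero => simp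
  | succ n ih =>
    rw [Nat.choose_succ_succ, Nat.cast_add, ih, Nat.cast_choose_two]
    push_cast
    ring

lemma delannoy_zero_right (n : ℕ) : delannoy n 0 = 1 := by
  simp [delannoy]

lemma delannoy_one_right (n : ℕ) : delannoy n 1 = 2 * n + 1 := by
  simp only [delannoy, Finset.sum_range_succ, Finset.range_one, Finset.sum_singleton,
    Nat.choose_one_right, Nat.choose_self, Nat.choose_succ_self_right, Nat.add_sub_cancel,
    Nat.sub_zero]
  ring

lemma delannoy_two_right (n : ℕ) : delannoy n 2 = 2 * n ^ 2 + 2 * n + 1 := by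
  qify
  simp only [delannoy, Finset.sum_range_succ, Finset.range_one, Finset.sum_singleton,
    Nat.choose_zero_right, Nat.choose_succ_self_right, Nat.choose_self, Nat.add_sub_cancel,
    Nat.add_one_sub_one, Nat.sub_zero]
  push_cast [Nat.cast_choose_two]
  ring

lemma delannoy_three_right (n : ℕ) : 3 * delannoy n 3 = 4 * n ^ 3 + 6 * n ^ 2 + 8 * n + 3 := by
  qify
  simp only [delannoy, Finset.sum_range_succ, Finset.range_one, Finset.sum_singleton,
    Nat.choose_zero_right, Nat.choose_one_right, Nat.choose_succ_self_right, Nat.choose_self,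
    Nat.add_sub_cancel, Nat.add_one_sub_one, Nat.sub_zero, Nat.reduceSubDiff]
  push_cast [cast_choose_three]
  ring

theorem ccPoly_area_width_add_three (k : ℕ) (hk : 4 ≤ k) :
    (ccPoly k (k + 3) : ℚ)
      = 32 / 3 * (k : ℚ) ^ 3 - 44 * (k : ℚ) ^ 2 + 268 / 3 * (k : ℚ) - 76 := by
  rw [ccPoly_add_eq_sum (by omega)]
  obtain ⟨m, rfl⟩ : ∃ m, k = m + 4 := ⟨k - 4, by omega⟩
  have hD3 : (delannoy m 3 : ℚ) = (4 * m ^ 3 + 6 * m ^ 2 + 8 * m + 3) / 3 := by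
    rw [eq_div_iff three_ne_zero, mul_comm]
    exact_mod_cast delannoy_three_right m
  simp only [Finset.sum_range_succ, Finset.sum_range_zero, Nat.sub_zero, Nat.sub_self]
  push_cast [show 2 * (m + 4) - 2 = 2 * m + 6 by omega, delannoy_zero_right, delannoy_one_right,
    delannoy_two_right, hD3, Nat.choose_zero_right, Nat.choose_one_right, Nat.cast_choose_two,
    cast_choose_three]
  ring
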